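/- arXiv:2301.02882 — 4 statements merged into one kernel-verified Lean document; each statement's English description precedes it below -/
import Mathlib

section
/- If f is Lipschitz with constant L_f, and Z̄^(M) and Z̄^(N) are two conditionally independent averages (given X) of M and N i.i.d. samples of Z respectively, then the MLMC correction Ŷ = f(Z̄^(M)) - f(Z̄^(N)) satisfies E[Ŷ² | X] ≤ 2 L_f² (1/M + 1/N) V[Z|X]. -/
/-!
Centre both sample averages at the common mean `m = 𝔼[Z₀]`. Lipschitz continuity and
`(x + y)² ≤ 2(x² + y²)` give `Ŷ² ≤ 2L²((Z̄^(M) - m)² + (Z̄^(N) - m)²)` pointwise, and the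
expectation of each square is the variance of the average, `Var[Z₀]/M` resp. `Var[Z₀]/N`,
by pairwise independence of the samples.
-/

open MeasureTheory ProbabilityTheory
open scoped NNReal ENNReal

lemma LipschitzWith.sq_sub_le {L : ℝ≥0} {f : ℝ → ℝ} (hf : LipschitzWith L f) (a b c : ℝ) :
    (f a - f b) ^ 2 ≤ 2 * (L : ℝ) ^ 2 * ((a - c) ^ 2 + (b - c) ^ 2) := by
  have hac : |f a - f c| ≤ L * |a - c| := by simpa [Real.dist_eq] using hf.dist_le_mul a c
  have hbc : |f b - f c| ≤ L * |b - c| := by simpa [Real.dist_eq] using hf.dist_le_mul b c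
  calc (f a - f b) ^ 2 = ((f a - f c) + (f c - f b)) ^ 2 := by ring
    _ ≤ 2 * ((f a - f c) ^ 2 + (f c - f b) ^ 2) := add_sq_le
    _ = 2 * (|f a - f c| ^ 2 + |f b - f c| ^ 2) := by simp only [sq_abs]; ring
    _ ≤ 2 * ((L * |a - c|) ^ 2 + (L * |b - c|) ^ 2) := by gcongr
    _ = 2 * (L : ℝ) ^ 2 * ((a - c) ^ 2 + (b - c) ^ 2) := by
        simp only [mul_pow, sq_abs]; ring

noncomputable def sampleMean {Ω ι : Type*} [Fintype ι] (X : ι → Ω → ℝ) (ω : Ω) : ℝ :=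
  (Fintype.card ι : ℝ)⁻¹ * ∑ i, X i ω

lemma sampleMean_eq_smul_sum {Ω ι : Type*} [Fintype ι] (X : ι → Ω → ℝ) :
    sampleMean X = (Fintype.card ι : ℝ)⁻¹ • ∑ i, X i := by
  ext ω; simp [sampleMean, Finset.sum_apply]

section SampleMean

variable {Ω ι : Type*} [MeasurableSpace Ω] {μ : Measure Ω} [Fintype ι]
  {X : ι → Ω → ℝ} {Y : Ω → ℝ}

lemma memLp_sampleMean {p : ℝ≥0∞} (hX : ∀ i, MemLp (X i) p μ) : MemLp (sampleMean X) p μ := by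
  rw [sampleMean_eq_smul_sum]
  exact (memLp_finsetSum' _ fun i _ ↦ hX i).const_smul _

lemma integral_sampleMean [Nonempty ι] (hX : ∀ i, Integrable (X i) μ)
    (hmean : ∀ i, ∫ ω, X i ω ∂μ = ∫ ω, Y ω ∂μ) :
    ∫ ω, sampleMean X ω ∂μ = ∫ ω, Y ω ∂μ := by
  simp only [sampleMean, integral_const_mul, integral_finsetSum _ fun i _ ↦ hX i, hmean,
    Finset.sum_const, Finset.card_univ, nsmul_eq_mul]
  field_simp

lemma variance_sampleMean (hX : ∀ i, MemLp (X i) 2 μ)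
    (hvar : ∀ i, variance (X i) μ = variance Y μ)
    (hindep : Pairwise fun i j ↦ IndepFun (X i) (X j) μ) :
    variance (sampleMean X) μ = (Fintype.card ι : ℝ)⁻¹ * variance Y μ := by
  rw [sampleMean_eq_smul_sum, variance_smul,
    IndepFun.variance_sum (fun i _ ↦ hX i) fun i _ j _ hij ↦ hindep hij]
  simp only [hvar, Finset.sum_const, Finset.card_univ, nsmul_eq_mul]
  rcases eq_or_ne (Fintype.card ι : ℝ) 0 with hcard | hcard
  · simp [hcard]
  · field_simp

variable [IsFiniteMeasure μ]

lemma integrable_sq_sampleMean_sub (hY : MemLp Y 2 μ) (hident : ∀ i, IdentDistrib (X i) Y μ μ)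
    (c : ℝ) : Integrable (fun ω ↦ (sampleMean X ω - c) ^ 2) μ :=
  ((memLp_sampleMean fun i ↦ (hident i).symm.memLp_snd hY).sub (memLp_const c)).integrable_sq

lemma integral_sq_sampleMean_sub [Nonempty ι] (hY : MemLp Y 2 μ)
    (hident : ∀ i, IdentDistrib (X i) Y μ μ)
    (hindep : Pairwise fun i j ↦ IndepFun (X i) (X j) μ) :
    ∫ ω, (sampleMean X ω - ∫ ω, Y ω ∂μ) ^ 2 ∂μ = (Fintype.card ι : ℝ)⁻¹ * variance Y μ := by
  have hX : ∀ i, MemLp (X i) 2 μ := fun i ↦ (hident i).symm.memLp_snd hY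
  have hmean : ∫ ω, sampleMean X ω ∂μ = ∫ ω, Y ω ∂μ :=
    integral_sampleMean (fun i ↦ (hX i).integrable one_le_two) fun i ↦ (hident i).integral_eq
  rw [← hmean, ← variance_eq_integral (memLp_sampleMean hX).aemeasurable,
    variance_sampleMean hX (fun i ↦ (hident i).variance_eq) hindep]

end SampleMean

theorem mlmc_correction_mse_bound_general
    {Ω : Type*} [MeasureSpace Ω] [IsProbabilityMeasure (ℙ : Measure Ω)]
    (M N : ℕ) (hM : 0 < M) (hN : 0 < N)
    (Z : (Fin M ⊕ Fin N) → Ω → ℝ) (Z₀ : Ω → ℝ)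
    (hident : ∀ i, IdentDistrib (Z i) Z₀ ℙ ℙ)
    (hindep : iIndepFun Z ℙ)
    (hsq : MemLp Z₀ 2 ℙ)
    (L : ℝ≥0) (f : ℝ → ℝ) (hf : LipschitzWith L f) :
    ∫ ω, (f ((M : ℝ)⁻¹ * ∑ i, Z (Sum.inl i) ω)
          - f ((N : ℝ)⁻¹ * ∑ j, Z (Sum.inr j) ω))^2 ∂ℙ
      ≤ 2 * (L : ℝ)^2 * ((M : ℝ)⁻¹ + (N : ℝ)⁻¹) * variance Z₀ ℙ := by
  have : NeZero M := ⟨hM.ne'⟩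
  have : NeZero N := ⟨hN.ne'⟩
  set A := sampleMean fun i : Fin M ↦ Z (Sum.inl i)
  set B := sampleMean fun j : Fin N ↦ Z (Sum.inr j)
  set m := ∫ ω, Z₀ ω ∂ℙ
  have hA : ∫ ω, (A ω - m) ^ 2 = (M : ℝ)⁻¹ * variance Z₀ ℙ := by
    simpa using integral_sq_sampleMean_sub hsq (fun i ↦ hident _)
      fun i j hij ↦ hindep.indepFun (Sum.inl_injective.ne hij)
  have hB : ∫ ω, (B ω - m) ^ 2 = (N : ℝ)⁻¹ * variance Z₀ ℙ := by
    simpa using integral_sq_sampleMean_sub hsq (fun j ↦ hident _)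
      fun i j hij ↦ hindep.indepFun (Sum.inr_injective.ne hij)
  have hA_int := integrable_sq_sampleMean_sub hsq (fun i : Fin M ↦ hident (Sum.inl i)) m
  have hB_int := integrable_sq_sampleMean_sub hsq (fun j : Fin N ↦ hident (Sum.inr j)) m
  calc _ = ∫ ω, (f (A ω) - f (B ω)) ^ 2 := by simp only [A, B, sampleMean, Fintype.card_fin]
    _ ≤ ∫ ω, 2 * (L : ℝ) ^ 2 * ((A ω - m) ^ 2 + (B ω - m) ^ 2) :=
        integral_mono_of_nonneg (.of_forall fun _ ↦ sq_nonneg _)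
          ((hA_int.add hB_int).const_mul _) (.of_forall fun ω ↦ hf.sq_sub_le (A ω) (B ω) m)
    _ = 2 * (L : ℝ) ^ 2 * ((M : ℝ)⁻¹ + (N : ℝ)⁻¹) * variance Z₀ ℙ := by
        rw [integral_const_mul, integral_add hA_int hB_int, hA, hB]
        ring

/-- Working under the conditional law given `X` (a probability measure `ℙ`),
let `Z (Sum.inl i)`, `i < M`, and `Z (Sum.inr j)`, `j < N`, be jointly independent i.i.d.
copies of `Z₀` with finite variance.  If `f` is `L`-Lipschitz then the MLMC correction
`Ŷ = f(Z̄^(M)) - f(Z̄^(N))` built from the two independent sample averages satisfies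
`E[Ŷ²] ≤ 2 L² (1/M + 1/N) Var[Z₀]`. -/
theorem mlmc_correction_mse_bound
    {Ω : Type*} [MeasureSpace Ω] [IsProbabilityMeasure (ℙ : Measure Ω)]
    (M N : ℕ) (hM : 0 < M) (hN : 0 < N)
    (Z : (Fin M ⊕ Fin N) → Ω → ℝ) (Z₀ : Ω → ℝ)
    (hmeas : ∀ i, Measurable (Z i)) (hmeas₀ : Measurable Z₀)
    (hident : ∀ i, IdentDistrib (Z i) Z₀ ℙ ℙ)
    (hindep : iIndepFun Z ℙ)
    (hsq : MemLp Z₀ 2 ℙ)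
    (L : ℝ≥0) (f : ℝ → ℝ) (hf : LipschitzWith L f) :
    ∫ ω, (f ((M : ℝ)⁻¹ * ∑ i, Z (Sum.inl i) ω)
          - f ((N : ℝ)⁻¹ * ∑ j, Z (Sum.inr j) ω))^2 ∂ℙ
      ≤ 2 * (L : ℝ)^2 * ((M : ℝ)⁻¹ + (N : ℝ)⁻¹) * variance Z₀ ℙ :=
  mlmc_correction_mse_bound_general M N hM hN Z Z₀ hident hindep hsq L f hf
end

section
/- Suppose for levels ℓ = 0, ..., L the variance of the level-ℓ estimator based on N_ℓ samples is V_ℓ/N_ℓ and its cost is N_ℓ C_ℓ, with V_ℓ, C_ℓ > 0. Subject to the total-variance constraint ∑_ℓ V_ℓ/N_ℓ ≤ ε², the total cost ∑_ℓ N_ℓ C_ℓ is minimized (over positive reals N_ℓ) by N_ℓ = ε^{-2} √(V_ℓ/C_ℓ) ∑_k √(V_k C_k), and the minimal cost equals ε^{-2} (∑_ℓ √(C_ℓ V_ℓ))². -/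
open Finset

/-- (Classic MLMC cost optimization.)  With per-level variances `V ℓ / N ℓ`
and costs `N ℓ * C ℓ`, subject to the total-variance constraint `∑ V ℓ / N ℓ ≤ ε²`, the total
cost `∑ N ℓ * C ℓ` is minimized over positive reals `N ℓ` by
`N ℓ = ε⁻² √(V ℓ / C ℓ) ∑ₖ √(V k * C k)`, this choice is feasible, and the minimal cost is
`ε⁻² (∑ √(C ℓ * V ℓ))²`. -/
theorem mlmc_cost_optimization
    (L : ℕ) (V C : Fin (L + 1) → ℝ) (hV : ∀ ℓ, 0 < V ℓ) (hC : ∀ ℓ, 0 < C ℓ)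
    (ε : ℝ) (hε : 0 < ε)
    (Nopt : Fin (L + 1) → ℝ)
    (hNopt : ∀ ℓ, Nopt ℓ = ε⁻¹^2 * Real.sqrt (V ℓ / C ℓ)
      * ∑ k, Real.sqrt (V k * C k)) :
    (∑ ℓ, V ℓ / Nopt ℓ ≤ ε^2) ∧
    (∀ N : Fin (L + 1) → ℝ, (∀ ℓ, 0 < N ℓ) → (∑ ℓ, V ℓ / N ℓ ≤ ε^2) →
      ∑ ℓ, Nopt ℓ * C ℓ ≤ ∑ ℓ, N ℓ * C ℓ) ∧
    (∑ ℓ, Nopt ℓ * C ℓ = ε⁻¹^2 * (∑ ℓ, Real.sqrt (C ℓ * V ℓ))^2) := by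
  set S : ℝ := ∑ k, Real.sqrt (V k * C k) with hSdef
  have hS : 0 < S := by
    refine Finset.sum_pos (fun k _ => Real.sqrt_pos.mpr (mul_pos (hV k) (hC k))) ⟨0, by simp⟩
  -- key algebraic identities
  have hab : ∀ ℓ, Real.sqrt (V ℓ / C ℓ) * Real.sqrt (V ℓ * C ℓ) = V ℓ := by
    intro ℓ
    have hv := hV ℓ; have hc := hC ℓ
    rw [← Real.sqrt_mul (by positivity)]
    have h : V ℓ / C ℓ * (V ℓ * C ℓ) = (V ℓ) ^ 2 := by
      field_simp
    rw [h, Real.sqrt_sq hv.le]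
  have hcost : ∀ ℓ, Nopt ℓ * C ℓ = ε⁻¹ ^ 2 * Real.sqrt (V ℓ * C ℓ) * S := by
    intro ℓ
    have hv := hV ℓ; have hc := hC ℓ
    rw [hNopt ℓ]
    have h : Real.sqrt (V ℓ / C ℓ) * C ℓ = Real.sqrt (V ℓ * C ℓ) := by
      nth_rewrite 2 [← Real.sqrt_sq hc.le]
      rw [← Real.sqrt_mul (by positivity)]
      congr 1
      field_simp
    calc ε⁻¹ ^ 2 * Real.sqrt (V ℓ / C ℓ) * S * C ℓ
        = ε⁻¹ ^ 2 * (Real.sqrt (V ℓ / C ℓ) * C ℓ) * S := by ring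
      _ = ε⁻¹ ^ 2 * Real.sqrt (V ℓ * C ℓ) * S := by rw [h]
  have hcostsum : ∑ ℓ, Nopt ℓ * C ℓ = ε⁻¹ ^ 2 * S ^ 2 := by
    simp only [hcost]
    rw [← Finset.sum_mul, ← Finset.mul_sum, ← hSdef]
    ring
  refine ⟨?_, ?_, ?_⟩
  · -- feasibility
    have hterm : ∀ ℓ, V ℓ / Nopt ℓ = ε ^ 2 * Real.sqrt (V ℓ * C ℓ) / S := by
      intro ℓ
      have hv := hV ℓ; have hc := hC ℓ
      rw [hNopt ℓ]
      have h1 : Real.sqrt (V ℓ / C ℓ) ≠ 0 := ne_of_gt (Real.sqrt_pos.mpr (by positivity))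
      have h2 : Real.sqrt (V ℓ * C ℓ) ≠ 0 := ne_of_gt (Real.sqrt_pos.mpr (by positivity))
      rw [div_eq_div_iff (by positivity) hS.ne']
      calc V ℓ * S = (Real.sqrt (V ℓ / C ℓ) * Real.sqrt (V ℓ * C ℓ)) * S := by rw [hab ℓ]
        _ = ε ^ 2 * Real.sqrt (V ℓ * C ℓ) * (ε⁻¹ ^ 2 * Real.sqrt (V ℓ / C ℓ) * S) := by
            field_simp
    have : ∑ ℓ, V ℓ / Nopt ℓ = ε ^ 2 := by
      calc ∑ ℓ, V ℓ / Nopt ℓ = ∑ ℓ, ε ^ 2 * Real.sqrt (V ℓ * C ℓ) / S := by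
            simp only [hterm]
        _ = ε ^ 2 * S / S := by rw [← Finset.sum_div, ← Finset.mul_sum, ← hSdef]
        _ = ε ^ 2 := by field_simp
    exact this.le
  · -- optimality via Cauchy–Schwarz
    intro N hNp hfeas
    have hCS := Finset.sum_mul_sq_le_sq_mul_sq Finset.univ
      (fun ℓ => Real.sqrt (V ℓ / N ℓ)) (fun ℓ => Real.sqrt (N ℓ * C ℓ))
    have h1 : ∀ ℓ : Fin (L+1), Real.sqrt (V ℓ / N ℓ) * Real.sqrt (N ℓ * C ℓ)
        = Real.sqrt (V ℓ * C ℓ) := by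
      intro ℓ
      have hv := hV ℓ; have hc := hC ℓ; have hn := hNp ℓ
      rw [← Real.sqrt_mul (by positivity)]
      congr 1
      field_simp
    have h2 : ∀ ℓ : Fin (L+1), Real.sqrt (V ℓ / N ℓ) ^ 2 = V ℓ / N ℓ := by
      intro ℓ
      have hv := hV ℓ; have hn := hNp ℓ
      exact Real.sq_sqrt (by positivity)
    have h3 : ∀ ℓ : Fin (L+1), Real.sqrt (N ℓ * C ℓ) ^ 2 = N ℓ * C ℓ := by
      intro ℓ
      have hc := hC ℓ; have hn := hNp ℓ
      exact Real.sq_sqrt (by positivity)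
    simp only [h1, h2, h3] at hCS
    have hsumNC : 0 ≤ ∑ ℓ, N ℓ * C ℓ :=
      Finset.sum_nonneg fun ℓ _ => (mul_pos (hNp ℓ) (hC ℓ)).le
    have hkey : S ^ 2 ≤ ε ^ 2 * ∑ ℓ, N ℓ * C ℓ :=
      hCS.trans (mul_le_mul_of_nonneg_right hfeas hsumNC)
    rw [hcostsum, inv_pow, inv_mul_le_iff₀ (by positivity)]
    linarith [hkey]
  · rw [hcostsum]
    congr 2
    rw [hSdef]
    exact Finset.sum_congr rfl fun ℓ _ => by rw [mul_comm]
end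

section
/- Suppose |E[P̂_ℓ - P]| ≤ c₁ 2^{-αℓ}, V_ℓ ≤ c₂ 2^{-βℓ}, C_ℓ ≤ c₃ 2^{γℓ} with α, c₁, c₂, c₃ > 0 and γ > β > 0. Choosing L = ⌈log₂(2c₁/ε)/α⌉ so that the bias is at most ε/2, the MLMC cost ε^{-2}(∑_{ℓ=0}^L √(C_ℓ V_ℓ))² is bounded by a constant times ε^{-2-(γ-β)/α}. -/
/-!
Since `C ℓ V ℓ ≤ c₂ c₃ ρ^(2ℓ)` with `ρ = 2^((γ-β)/2) > 1`, the sum `∑_(ℓ ≤ L) √(C ℓ V ℓ)` is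
dominated by a geometric sum, hence by a multiple of its last term: its square is
`O(2^((γ-β)(L+1)))`. The ceiling in `L` gives `2^(-αL) ≤ ε/(2c₁)`, which is the bias bound, and
`L ≤ log₂(max 1 (2c₁) / ε)/α + 1`, which turns `2^((γ-β)(L+1))` into `O(ε^(-(γ-β)/α))`.
-/

open Finset Real

lemma geom_sum_le_of_one_lt {K : Type*} [Field K] [LinearOrder K] [IsStrictOrderedRing K]
    {x : K} (hx : 1 < x) (n : ℕ) : ∑ i ∈ range n, x ^ i ≤ x ^ n / (x - 1) := by
  rw [geom_sum_eq hx.ne']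
  gcongr
  linarith

lemma mul_rpow_neg_mul_ceil_logb_div_le {b α a t : ℝ} (hb : 1 < b) (hα : 0 < α) (ha : 0 < a)
    (ht : 0 < t) : a * b ^ (-(α * ⌈logb b (a / t) / α⌉₊)) ≤ t := by
  have hlog : logb b (a / t) ≤ α * ⌈logb b (a / t) / α⌉₊ :=
    (div_le_iff₀' hα).mp (Nat.le_ceil _)
  calc a * b ^ (-(α * ⌈logb b (a / t) / α⌉₊))
      ≤ a * b ^ (-logb b (a / t)) := by gcongr; exact hb.le
    _ = t := by
      rw [rpow_neg (by linarith), rpow_logb (by linarith) hb.ne' (by positivity)]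
      field_simp

lemma ceil_logb_div_le {b α a t : ℝ} (hb : 1 < b) (hα : 0 < α) (ha : 0 < a) (ht : 0 < t)
    (ht1 : t ≤ 1) :
    (⌈logb b (a / t) / α⌉₊ : ℝ) ≤ logb b (max 1 a / t) / α + 1 := by
  have hmax : 1 ≤ max 1 a / t := (one_le_div ht).mpr (ht1.trans (le_max_left _ _))
  have hlog : logb b (a / t) / α ≤ logb b (max 1 a / t) / α := by
    gcongr
    exact le_max_right _ _
  calc (⌈logb b (a / t) / α⌉₊ : ℝ) ≤ ⌈logb b (max 1 a / t) / α⌉₊ := by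
        exact_mod_cast Nat.ceil_mono hlog
    _ ≤ logb b (max 1 a / t) / α + 1 :=
        (Nat.ceil_lt_add_one (div_nonneg (logb_nonneg hb hmax) hα.le)).le

lemma rpow_mul_succ_ceil_logb_div_le {b α δ a t : ℝ} (hb : 1 < b) (hα : 0 < α) (hδ : 0 ≤ δ)
    (ha : 0 < a) (ht : 0 < t) (ht1 : t ≤ 1) :
    b ^ (δ * (⌈logb b (a / t) / α⌉₊ + 1)) ≤
      b ^ (2 * δ) * max 1 a ^ (δ / α) * t ^ (-(δ / α)) := by
  have hm : 0 < max 1 a := lt_max_of_lt_left one_pos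
  calc b ^ (δ * (⌈logb b (a / t) / α⌉₊ + 1))
      ≤ b ^ (δ * (logb b (max 1 a / t) / α + 2)) := by
        gcongr b ^ ?_
        · exact hb.le
        · exact mul_le_mul_of_nonneg_left (by linarith [ceil_logb_div_le hb hα ha ht ht1]) hδ
    _ = b ^ (2 * δ) * max 1 a ^ (δ / α) * t ^ (-(δ / α)) := by
      rw [show δ * (logb b (max 1 a / t) / α + 2) = 2 * δ + logb b (max 1 a / t) * (δ / α) by ring,
        rpow_add (by linarith), rpow_mul (by linarith) (logb b _), rpow_logb (by linarith) hb.ne' (by positivity),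
        div_rpow hm.le ht.le, rpow_neg ht.le, div_eq_mul_inv, mul_assoc]

lemma sqrt_mul_le_of_le_two_rpow {β γ c₂ c₃ x C V : ℝ} (hC0 : 0 ≤ C) (hV0 : 0 ≤ V)
    (hC : C ≤ c₃ * (2:ℝ) ^ (γ * x)) (hV : V ≤ c₂ * (2:ℝ) ^ (-(β * x))) :
    √(C * V) ≤ √(c₂ * c₃) * (2:ℝ) ^ ((γ - β) / 2 * x) := by
  have hprod : C * V ≤ c₂ * c₃ * ((2:ℝ) ^ ((γ - β) / 2 * x)) ^ 2 := by
    calc C * V ≤ c₃ * (2:ℝ) ^ (γ * x) * (c₂ * (2:ℝ) ^ (-(β * x))) :=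
          mul_le_mul hC hV hV0 (hC0.trans hC)
      _ = c₂ * c₃ * ((2:ℝ) ^ ((γ - β) / 2 * x)) ^ 2 := by
        rw [← rpow_two, ← rpow_mul zero_le_two, mul_mul_mul_comm, ← rpow_add two_pos]
        ring_nf
  calc √(C * V) ≤ √(c₂ * c₃ * ((2:ℝ) ^ ((γ - β) / 2 * x)) ^ 2) := sqrt_le_sqrt hprod
    _ = √(c₂ * c₃) * (2:ℝ) ^ ((γ - β) / 2 * x) := by
      rw [sqrt_mul' _ (sq_nonneg _), sqrt_sq (rpow_nonneg zero_le_two _)]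

lemma sq_sum_sqrt_mul_le {β γ c₂ c₃ : ℝ} (hβγ : β < γ) (hc₂ : 0 ≤ c₂) (hc₃ : 0 ≤ c₃)
    {C V : ℕ → ℝ} (hC0 : ∀ ℓ, 0 ≤ C ℓ) (hV0 : ∀ ℓ, 0 ≤ V ℓ)
    (hC : ∀ ℓ, C ℓ ≤ c₃ * (2:ℝ) ^ (γ * ℓ)) (hV : ∀ ℓ, V ℓ ≤ c₂ * (2:ℝ) ^ (-(β * ℓ))) (n : ℕ) :
    (∑ ℓ ∈ range n, √(C ℓ * V ℓ)) ^ 2 ≤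
      c₂ * c₃ / ((2:ℝ) ^ ((γ - β) / 2) - 1) ^ 2 * (2:ℝ) ^ ((γ - β) * n) := by
  set ρ : ℝ := (2:ℝ) ^ ((γ - β) / 2)
  have hρ : 1 < ρ := one_lt_rpow one_lt_two (by linarith)
  have hsum : ∑ ℓ ∈ range n, √(C ℓ * V ℓ) ≤ √(c₂ * c₃) * (ρ ^ n / (ρ - 1)) :=
    calc ∑ ℓ ∈ range n, √(C ℓ * V ℓ) ≤ ∑ ℓ ∈ range n, √(c₂ * c₃) * ρ ^ ℓ := by
          refine sum_le_sum fun ℓ _ => ?_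
          rw [← rpow_mul_natCast zero_le_two]
          exact sqrt_mul_le_of_le_two_rpow (hC0 ℓ) (hV0 ℓ) (hC ℓ) (hV ℓ)
      _ = √(c₂ * c₃) * ∑ ℓ ∈ range n, ρ ^ ℓ := (mul_sum _ _ _).symm
      _ ≤ √(c₂ * c₃) * (ρ ^ n / (ρ - 1)) := by gcongr; exact geom_sum_le_of_one_lt hρ n
  have hρn : (ρ ^ n) ^ 2 = (2:ℝ) ^ ((γ - β) * n) := by
    rw [← rpow_mul_natCast zero_le_two, ← rpow_natCast _ 2, ← rpow_mul zero_le_two]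
    ring_nf
  calc (∑ ℓ ∈ range n, √(C ℓ * V ℓ)) ^ 2 ≤ (√(c₂ * c₃) * (ρ ^ n / (ρ - 1))) ^ 2 :=
        pow_le_pow_left₀ (sum_nonneg fun _ _ => sqrt_nonneg _) hsum 2
    _ = c₂ * c₃ / (ρ - 1) ^ 2 * (2:ℝ) ^ ((γ - β) * n) := by
      rw [mul_pow, div_pow, sq_sqrt (mul_nonneg hc₂ hc₃), hρn]
      ring

theorem mlmc_complexity_bound_general
    (α β γ c₁ c₂ c₃ : ℝ) (hα : 0 < α) (hβγ : β < γ)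
    (hc₁ : 0 < c₁) (hc₂ : 0 < c₂) (hc₃ : 0 < c₃) :
    ∃ c₄ > 0, ∀ ε : ℝ, 0 < ε → ε ≤ 1 →
      ∀ e V C : ℕ → ℝ,
      (∀ ℓ, |e ℓ| ≤ c₁ * (2:ℝ) ^ (-(α * ℓ))) →
      (∀ ℓ, 0 ≤ V ℓ) → (∀ ℓ, 0 ≤ C ℓ) →
      (∀ ℓ, V ℓ ≤ c₂ * (2:ℝ) ^ (-(β * ℓ))) →
      (∀ ℓ, C ℓ ≤ c₃ * (2:ℝ) ^ (γ * ℓ)) →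
      let L : ℕ := ⌈Real.logb 2 (2 * c₁ / ε) / α⌉₊
      |e L| ≤ ε / 2 ∧
      ε⁻¹ ^ 2 * (∑ ℓ ∈ Finset.range (L + 1), Real.sqrt (C ℓ * V ℓ))^2
        ≤ c₄ * ε ^ (-(2 + (γ - β) / α)) := by
  have hρ : 1 < (2:ℝ) ^ ((γ - β) / 2) := one_lt_rpow one_lt_two (by linarith)
  refine ⟨c₂ * c₃ / ((2:ℝ) ^ ((γ - β) / 2) - 1) ^ 2 *
      ((2:ℝ) ^ (2 * (γ - β)) * max 1 (2 * c₁) ^ ((γ - β) / α)), ?_, ?_⟩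
  · exact mul_pos (div_pos (mul_pos hc₂ hc₃) (pow_pos (sub_pos.2 hρ) 2)) (by positivity)
  intro ε hε hε1 e V C he hV hC hVb hCb L
  have hbias := mul_rpow_neg_mul_ceil_logb_div_le one_lt_two hα (mul_pos two_pos hc₁) hε
  refine ⟨by linarith [he L], ?_⟩
  calc ε⁻¹ ^ 2 * (∑ ℓ ∈ range (L + 1), √(C ℓ * V ℓ)) ^ 2
      ≤ ε⁻¹ ^ 2 * (c₂ * c₃ / ((2:ℝ) ^ ((γ - β) / 2) - 1) ^ 2 * (2:ℝ) ^ ((γ - β) * (L + 1))) := by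
        gcongr
        exact_mod_cast sq_sum_sqrt_mul_le hβγ hc₂.le hc₃.le hC hV hCb hVb (L + 1)
    _ ≤ ε⁻¹ ^ 2 * (c₂ * c₃ / ((2:ℝ) ^ ((γ - β) / 2) - 1) ^ 2 *
          ((2:ℝ) ^ (2 * (γ - β)) * max 1 (2 * c₁) ^ ((γ - β) / α) * ε ^ (-((γ - β) / α)))) := by
        gcongr
        exact rpow_mul_succ_ceil_logb_div_le one_lt_two hα (by linarith) (mul_pos two_pos hc₁) hε hε1
    _ = _ := by
        rw [neg_add, rpow_add hε, rpow_neg hε.le 2, rpow_two, inv_pow]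
        ring

/-- Suppose the bias satisfies `|E[P̂_ℓ - P]| = |e ℓ| ≤ c₁ 2^(-αℓ)`, the MLMC
variances `V ℓ ≤ c₂ 2^(-βℓ)` and costs `C ℓ ≤ c₃ 2^(γℓ)`, with `α, c₁, c₂, c₃ > 0` and
`γ > β > 0`.  Choosing `L = ⌈log₂(2c₁/ε)/α⌉` the bias at level `L` is at most `ε/2`, and the
MLMC cost `ε⁻² (∑_(ℓ=0)^L √(C ℓ V ℓ))²` is bounded by a constant (independent of `ε`) times
`ε^(-2-(γ-β)/α)`. -/
theorem mlmc_complexity_bound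
    (α β γ c₁ c₂ c₃ : ℝ) (hα : 0 < α) (hβ : 0 < β) (hβγ : β < γ)
    (hc₁ : 0 < c₁) (hc₂ : 0 < c₂) (hc₃ : 0 < c₃) :
    ∃ c₄ > 0, ∀ ε : ℝ, 0 < ε → ε ≤ 1 →
      ∀ e V C : ℕ → ℝ,
      (∀ ℓ, |e ℓ| ≤ c₁ * (2:ℝ) ^ (-(α * ℓ))) →
      (∀ ℓ, 0 ≤ V ℓ) → (∀ ℓ, 0 ≤ C ℓ) →
      (∀ ℓ, V ℓ ≤ c₂ * (2:ℝ) ^ (-(β * ℓ))) →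
      (∀ ℓ, C ℓ ≤ c₃ * (2:ℝ) ^ (γ * ℓ)) →
      let L : ℕ := ⌈Real.logb 2 (2 * c₁ / ε) / α⌉₊
      |e L| ≤ ε / 2 ∧
      ε⁻¹ ^ 2 * (∑ ℓ ∈ Finset.range (L + 1), Real.sqrt (C ℓ * V ℓ))^2
        ≤ c₄ * ε ^ (-(2 + (γ - β) / α)) :=
  mlmc_complexity_bound_general α β γ c₁ c₂ c₃ hα hβγ hc₁ hc₂ hc₃
end

section
/- Let G be a real random variable whose density near K is bounded by ρ_max, and let Ĝ_f, Ĝ_c be approximations with E[|Ĝ_f - G|^q]^{1/q} ≤ σ and E[|Ĝ_c - G|^q]^{1/q} ≤ σ for some q > 1. Then E[(H(Ĝ_f - K) - H(Ĝ_c - K))²] ≤ 2(2 ρ_max t + 2 σ^q / t^q) for every t > 0, and optimizing over t gives a bound of order ρ_max^{q/(q+1)} σ^{q/(q+1)}. -/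
/-!
Off the event that `G` lies within `t` of `K` or that one of `Ĝf`, `Ĝc` is at least `t` away
from `G`, both approximations lie on the same side of `K` as `G`, so their Heaviside values
agree. The first event has probability at most `2 ρmax t` by the density bound, the other two
at most `σ^q / t^q` each by Markov's inequality for `|Ĝ - G|^q`. Balancing the two terms at
`t^(q+1) = σ^q / ρmax` gives the rate `(ρmax σ)^(q/(q+1))`; the degenerate cases `ρmax = 0` or
`σ = 0` follow by perturbing both to be positive and letting the perturbation vanish.
-/

open MeasureTheory ProbabilityTheory Filter Topology

noncomputable def Heaviside (x : ℝ) : ℝ := if x < 0 then 0 else 1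

lemma heaviside_sub_heaviside_sq_le_one (x y : ℝ) : (Heaviside x - Heaviside y) ^ 2 ≤ 1 := by
  unfold Heaviside; split_ifs <;> norm_num

lemma heaviside_eq_of_abs_sub_lt_abs {x y : ℝ} (h : |x - y| < |y|) :
    Heaviside x = Heaviside y := by
  unfold Heaviside
  rcases abs_lt.mp h with ⟨h₁, h₂⟩
  rcases le_or_gt 0 y with hy | hy
  · rw [abs_of_nonneg hy] at h₁ h₂
    rw [if_neg (by linarith), if_neg (by linarith)]
  · rw [abs_of_neg hy] at h₁ h₂
    rw [if_pos (by linarith), if_pos hy]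

section Probability

variable {Ω : Type*} [MeasurableSpace Ω] {μ : Measure Ω}

lemma integral_le_measureReal_of_le_indicator [IsFiniteMeasure μ] {f : Ω → ℝ} {s : Set Ω}
    (hs : MeasurableSet s) (hf₀ : 0 ≤ f) (hf : f ≤ s.indicator 1) :
    ∫ ω, f ω ∂μ ≤ μ.real s := by
  rw [← integral_indicator_one hs]
  exact integral_mono_of_nonneg (ae_of_all _ hf₀)
    ((integrable_const 1).indicator hs) (ae_of_all _ hf)

lemma measureReal_le_abs_le_rpow_div_rpow {X : Ω → ℝ} {q σ t : ℝ} (hq : 0 < q) (ht : 0 < t)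
    (hint : Integrable (fun ω => |X ω| ^ q) μ) (hσ : (∫ ω, |X ω| ^ q ∂μ) ^ (1 / q) ≤ σ) :
    μ.real {ω | t ≤ |X ω|} ≤ σ ^ q / t ^ q := by
  have hmoment : ∫ ω, |X ω| ^ q ∂μ ≤ σ ^ q := by
    rw [one_div] at hσ
    exact (Real.rpow_inv_le_iff_of_pos (integral_nonneg fun ω => by positivity)
      ((Real.rpow_nonneg (integral_nonneg fun ω => by positivity) _).trans hσ) hq).mp hσ
  have hset : {ω | t ≤ |X ω|} = {ω | t ^ q ≤ |X ω| ^ q} := by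
    ext ω
    exact (Real.rpow_le_rpow_iff ht.le (abs_nonneg _) hq).symm
  rw [hset, le_div_iff₀ (by positivity), mul_comm]
  exact (mul_meas_ge_le_integral_of_nonneg (ae_of_all _ fun ω => by positivity) hint _).trans
    hmoment

lemma integral_heaviside_sub_heaviside_sq_le [IsFiniteMeasure μ] {G Gf Gc : Ω → ℝ}
    (hG : Measurable G) (hGf : Measurable Gf) (hGc : Measurable Gc) (K t : ℝ) :
    ∫ ω, (Heaviside (Gf ω - K) - Heaviside (Gc ω - K)) ^ 2 ∂μ ≤
      μ.real {ω | |G ω - K| ≤ t} + μ.real {ω | t ≤ |Gf ω - G ω|} +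
        μ.real {ω | t ≤ |Gc ω - G ω|} := by
  set S := {ω | |G ω - K| ≤ t} ∪ {ω | t ≤ |Gf ω - G ω|} ∪ {ω | t ≤ |Gc ω - G ω|}
  have hS : MeasurableSet S := by
    refine (MeasurableSet.union ?_ ?_).union ?_ <;> apply measurableSet_le <;> fun_prop
  have hle : (fun ω => (Heaviside (Gf ω - K) - Heaviside (Gc ω - K)) ^ 2) ≤ S.indicator 1 := by
    intro ω
    by_cases hω : ω ∈ S
    · simpa [hω] using heaviside_sub_heaviside_sq_le_one _ _
    · obtain ⟨⟨hGK, hf⟩, hc⟩ : (t < |G ω - K| ∧ |Gf ω - G ω| < t) ∧ |Gc ω - G ω| < t := by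
        simpa [S, not_or] using hω
      have hfG : Heaviside (Gf ω - K) = Heaviside (G ω - K) :=
        heaviside_eq_of_abs_sub_lt_abs (by rw [sub_sub_sub_cancel_right]; linarith)
      have hcG : Heaviside (Gc ω - K) = Heaviside (G ω - K) :=
        heaviside_eq_of_abs_sub_lt_abs (by rw [sub_sub_sub_cancel_right]; linarith)
      simp [Set.indicator_of_notMem hω, hfG, hcG]
  calc _ ≤ μ.real S := integral_le_measureReal_of_le_indicator hS (fun ω => sq_nonneg _) hle
    _ ≤ _ := (measureReal_union_le _ _).trans (by gcongr; exact measureReal_union_le _ _)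

end Probability

lemma exists_pos_mul_add_rpow_div_rpow_eq {q ρ σ : ℝ} (hq : 0 < q) (hρ : 0 < ρ) (hσ : 0 < σ) :
    ∃ t > 0, ρ * t + σ ^ q / t ^ q = 2 * ρ ^ (q / (q + 1)) * σ ^ (q / (q + 1)) := by
  -- `t = exp s` solves `t ^ (q + 1) = σ ^ q / ρ`, where the two terms are equal.
  set s := (q * Real.log σ - Real.log ρ) / (q + 1) with hs
  refine ⟨Real.exp s, Real.exp_pos s, ?_⟩
  have hbalance : ρ * Real.exp s = ρ ^ (q / (q + 1)) * σ ^ (q / (q + 1)) ∧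
      σ ^ q / Real.exp s ^ q = ρ ^ (q / (q + 1)) * σ ^ (q / (q + 1)) := by
    nth_rewrite 1 [← Real.exp_log hρ]
    simp only [Real.rpow_def_of_pos hρ, Real.rpow_def_of_pos hσ,
      Real.rpow_def_of_pos (Real.exp_pos _), Real.log_exp, ← Real.exp_add, ← Real.exp_sub]
    constructor <;> congr 1 <;> rw [hs] <;> field_simp <;> ring
  rw [hbalance.1, hbalance.2]
  ring

lemma le_of_forall_le_mul_add_rpow_div_rpow {q c ρ σ X : ℝ} (hq : 0 < q) (hc : 0 ≤ c)
    (hρ : 0 ≤ ρ) (hσ : 0 ≤ σ) (h : ∀ t > 0, X ≤ c * (ρ * t + σ ^ q / t ^ q)) :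
    X ≤ 2 * c * ρ ^ (q / (q + 1)) * σ ^ (q / (q + 1)) := by
  have hα : 0 < q / (q + 1) := by positivity
  have hperturbed : ∀ ε > 0, X ≤ 2 * c * (ρ + ε) ^ (q / (q + 1)) * (σ + ε) ^ (q / (q + 1)) := by
    intro ε hε
    obtain ⟨t, ht, heq⟩ := exists_pos_mul_add_rpow_div_rpow_eq hq (by positivity : 0 < ρ + ε)
      (by positivity : 0 < σ + ε)
    calc X ≤ c * (ρ * t + σ ^ q / t ^ q) := h t ht
      _ ≤ c * ((ρ + ε) * t + (σ + ε) ^ q / t ^ q) := by gcongr <;> linarith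
      _ = _ := by rw [heq]; ring
  have hlim : Tendsto (fun ε => 2 * c * (ρ + ε) ^ (q / (q + 1)) * (σ + ε) ^ (q / (q + 1)))
      (𝓝[>] 0) (𝓝 (2 * c * ρ ^ (q / (q + 1)) * σ ^ (q / (q + 1)))) := by
    refine tendsto_nhdsWithin_of_tendsto_nhds ?_
    have hshift (a : ℝ) : Continuous fun ε : ℝ => (a + ε) ^ (q / (q + 1)) :=
      (continuous_const.add continuous_id).rpow_const fun _ => Or.inr hα.le
    simpa using (tendsto_const_nhds.mul ((hshift ρ).tendsto 0)).mul ((hshift σ).tendsto 0)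
  exact ge_of_tendsto hlim (eventually_nhdsWithin_of_forall hperturbed)

/-- (Avikainen-type estimate.)  If the density of `G` near `K` is bounded
by `ρmax`, i.e. `P(|G - K| ≤ t) ≤ 2 ρmax t` for all `t > 0`, and the approximations
`Ĝf, Ĝc` satisfy `E[|Ĝf - G|^q]^(1/q) ≤ σ` and `E[|Ĝc - G|^q]^(1/q) ≤ σ` for some `q > 1`,
then `E[(H(Ĝf - K) - H(Ĝc - K))²] ≤ 2 (2 ρmax t + 2 σ^q / t^q)` for every `t > 0`, and
optimizing over `t` gives a bound `C · ρmax^(q/(q+1)) σ^(q/(q+1))` with `C` depending only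
on `q`. -/
theorem avikainen_estimate
    (q : ℝ) (hq : 1 < q) :
    ∃ C > 0, ∀ {Ω : Type} [MeasureSpace Ω] [IsProbabilityMeasure (ℙ : Measure Ω)]
      (G Gf Gc : Ω → ℝ), Measurable G → Measurable Gf → Measurable Gc →
      ∀ (K ρmax σ : ℝ), 0 ≤ ρmax → 0 ≤ σ →
      (∀ t : ℝ, 0 < t → (ℙ {ω | |G ω - K| ≤ t}).toReal ≤ 2 * ρmax * t) →
      Integrable (fun ω => |Gf ω - G ω| ^ q) ℙ →
      Integrable (fun ω => |Gc ω - G ω| ^ q) ℙ →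
      (∫ ω, |Gf ω - G ω| ^ q ∂ℙ) ^ (1/q) ≤ σ →
      (∫ ω, |Gc ω - G ω| ^ q ∂ℙ) ^ (1/q) ≤ σ →
      (∀ t : ℝ, 0 < t →
        (∫ ω, (Heaviside (Gf ω - K) - Heaviside (Gc ω - K))^2 ∂ℙ)
          ≤ 2 * (2 * ρmax * t + 2 * σ^q / t^q)) ∧
      (∫ ω, (Heaviside (Gf ω - K) - Heaviside (Gc ω - K))^2 ∂ℙ)
          ≤ C * ρmax ^ (q/(q+1)) * σ ^ (q/(q+1)) := by
  have hq₀ : 0 < q := zero_lt_one.trans hq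
  refine ⟨4, by norm_num, ?_⟩
  intro Ω _ _ G Gf Gc hG hGf hGc K ρmax σ hρ hσ hdens hintf hintc hmomf hmomc
  have hstraddle : ∀ t > 0, ∫ ω, (Heaviside (Gf ω - K) - Heaviside (Gc ω - K)) ^ 2 ∂ℙ ≤
      2 * (ρmax * t + σ ^ q / t ^ q) := fun t ht => by
    have hfar := integral_heaviside_sub_heaviside_sq_le (μ := ℙ) hG hGf hGc K t
    have hf :=
      measureReal_le_abs_le_rpow_div_rpow (X := fun ω => Gf ω - G ω) hq₀ ht hintf hmomf
    have hc :=
      measureReal_le_abs_le_rpow_div_rpow (X := fun ω => Gc ω - G ω) hq₀ ht hintc hmomc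
    have hnear := hdens t ht
    rw [← measureReal_def] at hnear
    linarith
  refine ⟨fun t ht => (hstraddle t ht).trans ?_, ?_⟩
  · have : 0 ≤ σ ^ q / t ^ q := by positivity
    rw [mul_div_assoc]
    linarith [mul_nonneg hρ ht.le]
  · linarith [le_of_forall_le_mul_add_rpow_div_rpow hq₀ zero_le_two hρ hσ hstraddle]
end
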